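/- arXiv:2103.04614 — 3 statements merged into one kernel-verified Lean document; each statement's English description precedes it below -/
import Mathlib

section
/- In the SIQR model with initial state (N-ε, ε, 0, 0), one has Q''(0) = αε(β(1-ε/N) - α - 2ρ), and consequently (-h₁Q' + Q'')|_{t=0} = -αρε < 0. -/
/-! At `t = 0` one has `Q' = αε` and `I' = ε h₁(0)`, so differentiating `Q' = αI - ρQ` gives
`Q''(0) = αε h₁(0) - ραε`; the `h₁` terms then cancel in `-h₁Q' + Q''`. -/

theorem hasDerivAt_of_forall_eq_mul_sub_mul {I Q Q' : ℝ → ℝ} {α ρ i' q' t : ℝ}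
    (hQ' : ∀ s, Q' s = α * I s - ρ * Q s) (hQ : HasDerivAt Q q' t)
    (hI : HasDerivAt I i' t) : HasDerivAt Q' (α * i' - ρ * q') t :=
  ((hI.const_mul α).sub (hQ.const_mul ρ)).congr_of_eventuallyEq (.of_forall hQ')

theorem siqr_Qsecond_initial_value_general
    (β ρ α N ε : ℝ) (hρ : 0 < ρ) (hα : 0 < α)
    (hε : 0 < ε) (hεN : ε < N)
    (S I Q Q' : ℝ → ℝ) (hS0 : S 0 = N - ε) (hI0 : I 0 = ε) (hQ0 : Q 0 = 0)
    (hQ' : ∀ s, Q' s = α * I s - ρ * Q s)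
    (hQd : ∀ s, HasDerivAt Q (Q' s) s)
    (hI : HasDerivAt I (β * S 0 * I 0 / (N - Q 0) - (ρ + α) * I 0) 0)
    (q2 : ℝ) (hq2 : HasDerivAt Q' q2 0) :
    q2 = α * ε * (β * (1 - ε / N) - α - 2 * ρ) ∧
    -(β * (1 - ε / N) - ρ - α) * Q' 0 + q2 = -(α * ρ * ε) ∧
    -(β * (1 - ε / N) - ρ - α) * Q' 0 + q2 < 0 := by
  set h₁ := β * (1 - ε / N) - ρ - α with hh₁
  have hQ'0 : Q' 0 = α * ε := by rw [hQ' 0, hI0, hQ0]; ring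
  have hI'0 : β * S 0 * I 0 / (N - Q 0) - (ρ + α) * I 0 = ε * h₁ := by
    rw [hS0, hI0, hQ0, hh₁]
    field_simp [(hε.trans hεN).ne']
    ring
  have hq2_eq : q2 = α * (ε * h₁) - ρ * (α * ε) := by
    rw [← hI'0, ← hQ'0]
    exact hq2.unique (hasDerivAt_of_forall_eq_mul_sub_mul hQ' (hQd 0) hI)
  have hcancel : -h₁ * Q' 0 + q2 = -(α * ρ * ε) := by rw [hq2_eq, hQ'0]; ring
  refine ⟨by rw [hq2_eq]; ring, hcancel, ?_⟩
  rw [hcancel, neg_neg_iff_pos]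
  positivity

/-- Q''(0) = αε(β(1-ε/N)-α-2ρ) and (-h₁Q'+Q'')(0) = -αρε < 0. -/
theorem siqr_Qsecond_initial_value
    (β ρ α N ε : ℝ) (hβ : 0 < β) (hρ : 0 < ρ) (hα : 0 < α)
    (hε : 0 < ε) (hεN : ε < N)
    (S I Q Q' : ℝ → ℝ) (hS0 : S 0 = N - ε) (hI0 : I 0 = ε) (hQ0 : Q 0 = 0)
    (hQ' : ∀ s, Q' s = α * I s - ρ * Q s)
    (hQd : ∀ s, HasDerivAt Q (Q' s) s)
    (hI : HasDerivAt I (β * S 0 * I 0 / (N - Q 0) - (ρ + α) * I 0) 0)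
    (q2 : ℝ) (hq2 : HasDerivAt Q' q2 0) :
    q2 = α * ε * (β * (1 - ε / N) - α - 2 * ρ) ∧
    -(β * (1 - ε / N) - ρ - α) * Q' 0 + q2 = -(α * ρ * ε) ∧
    -(β * (1 - ε / N) - ρ - α) * Q' 0 + q2 < 0 :=
  siqr_Qsecond_initial_value_general β ρ α N ε hρ hα hε hεN S I Q Q' hS0 hI0 hQ0 hQ' hQd hI q2 hq2
end

section
/- In the SIQR model, the quantity X := -βI + Q' satisfies the quadratic equation h₁'·X² + (h₂h₁ - h₂')·X + h₂·(-h₁Q' + Q'') = 0 wherever I > 0 and Q < N, where h₁ = y₁'/y₁ and h₂ = (N-Q)h₁'. -/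
/-!
Write `u = N - Q` and `X = -βI + Q'`. The `S`-equation gives `h₁' = βSX/u²`, hence `h₂ = βSX/u`
near `t` and `h₂' = (h₂X + βSX')/u`. Substituting, the `X²` terms cancel and the left-hand side
collapses to `β h₂ (I' - h₁ I)`, which vanishes because the `I`-equation reads `I' = h₁ I`.
-/

open Filter Topology

namespace SIQR

variable {β N : ℝ} {S I Q Q' : ℝ → ℝ} {s : ℝ}

theorem hasDerivAt_infection_rate (hS : HasDerivAt S (-β * S s * I s / (N - Q s)) s)
    (hQ : HasDerivAt Q (Q' s) s) (hs : N - Q s ≠ 0) :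
    HasDerivAt (fun x => β * S x / (N - Q x))
      (β * S s * (-β * I s + Q' s) / (N - Q s) ^ 2) s := by
  refine ((hS.const_mul β).div (hQ.const_sub N) hs).congr_deriv ?_
  field_simp
  ring

theorem hasDerivAt_h2_closedForm {dI q2 : ℝ}
    (hS : HasDerivAt S (-β * S s * I s / (N - Q s)) s) (hQ : HasDerivAt Q (Q' s) s)
    (hI : HasDerivAt I dI s) (hQ' : HasDerivAt Q' q2 s) (hs : N - Q s ≠ 0) :
    HasDerivAt (fun x => β * S x * (-β * I x + Q' x) / (N - Q x))
      ((β * S s * (-β * I s + Q' s) ^ 2 / (N - Q s) + β * S s * (-β * dI + q2)) / (N - Q s))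
      s := by
  refine (((hS.const_mul β).mul ((hI.const_mul (-β)).add hQ')).div (hQ.const_sub N) hs)
    |>.congr_deriv ?_
  simp only [Pi.mul_apply, Pi.add_apply]
  field_simp
  ring

end SIQR

theorem siqr_quadratic_identity_general
    (β ρ α N : ℝ)
    (S I Q Q' : ℝ → ℝ) (t : ℝ) (hQlt : Q t < N)
    (hQd : ∀ s, HasDerivAt Q (Q' s) s)
    (hS : ∀ s, HasDerivAt S (-β * S s * I s / (N - Q s)) s)
    (hI : ∀ s, HasDerivAt I (β * S s * I s / (N - Q s) - (ρ + α) * I s) s)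
    (h1 h1' h2 : ℝ → ℝ)
    (hh1 : ∀ s, h1 s = β * S s / (N - Q s) - α - ρ)
    (hh1d : ∀ s, HasDerivAt h1 (h1' s) s)
    (hh2 : ∀ s, h2 s = (N - Q s) * h1' s)
    (d2 : ℝ) (hd2 : HasDerivAt h2 d2 t)
    (q2 : ℝ) (hq2 : HasDerivAt Q' q2 t) :
    h1' t * (-β * I t + Q' t) ^ 2 + (h2 t * h1 t - d2) * (-β * I t + Q' t)
      + h2 t * (-h1 t * Q' t + q2) = 0 := by
  have hu : N - Q t ≠ 0 := (sub_pos.2 hQlt).ne'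
  have hh1'_eq : ∀ s, N - Q s ≠ 0 → h1' s = β * S s * (-β * I s + Q' s) / (N - Q s) ^ 2 := by
    intro s hs
    refine (hh1d s).unique ?_
    rw [funext hh1]
    exact ((SIQR.hasDerivAt_infection_rate (hS s) (hQd s) hs).sub_const α).sub_const ρ
  have hh2_eventually : h2 =ᶠ[𝓝 t] fun s => β * S s * (-β * I s + Q' s) / (N - Q s) := by
    filter_upwards [(continuousAt_const.sub (hQd t).continuousAt).eventually_ne hu] with s hs
    rw [hh2 s, hh1'_eq s hs]
    field_simp
  have hd2_eq := hd2.unique <|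
    (SIQR.hasDerivAt_h2_closedForm (hS t) (hQd t) (hI t) hq2 hu).congr_of_eventuallyEq
      hh2_eventually
  rw [hd2_eq, hh2 t, hh1'_eq t hu, hh1 t]
  field_simp
  ring

/-- X = -βI + Q' satisfies h₁'X² + (h₂h₁ - h₂')X + h₂(-h₁Q'+Q'') = 0. -/
theorem siqr_quadratic_identity
    (β ρ α N : ℝ) (hβ : 0 < β) (hρ : 0 < ρ) (hα : 0 < α)
    (S I Q Q' : ℝ → ℝ) (t : ℝ) (hIpos : 0 < I t) (hQlt : Q t < N)
    (hQ' : ∀ s, Q' s = α * I s - ρ * Q s)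
    (hQd : ∀ s, HasDerivAt Q (Q' s) s)
    (hS : ∀ s, HasDerivAt S (-β * S s * I s / (N - Q s)) s)
    (hI : ∀ s, HasDerivAt I (β * S s * I s / (N - Q s) - (ρ + α) * I s) s)
    (h1 h1' h2 : ℝ → ℝ)
    (hh1 : ∀ s, h1 s = β * S s / (N - Q s) - α - ρ)
    (hh1d : ∀ s, HasDerivAt h1 (h1' s) s)
    (hh2 : ∀ s, h2 s = (N - Q s) * h1' s)
    (d2 : ℝ) (hd2 : HasDerivAt h2 d2 t)
    (q2 : ℝ) (hq2 : HasDerivAt Q' q2 t) :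
    h1' t * (-β * I t + Q' t) ^ 2 + (h2 t * h1 t - d2) * (-β * I t + Q' t)
      + h2 t * (-h1 t * Q' t + q2) = 0 :=
  siqr_quadratic_identity_general β ρ α N S I Q Q' t hQlt hQd hS hI h1 h1' h2 hh1 hh1d hh2 d2 hd2 q2
    hq2
end

section
/- The 4×4 matrix M₁ with rows (-K₁, 0, 1, -1), (-K₂, 0, 0, -1), (-K₃, 0, 0, 0), (-K₄, -1, 0, 0), where K₁ = σ₁, K₂ = σ₁ + σ₃, K₃ = -σ₄, K₄ = -(σ₂ + σ₄ + 1) with σ_k the k-th elementary symmetric polynomial of positive reals λ₁,...,λ₄, has characteristic polynomial (X+λ₁)(X+λ₂)(X+λ₃)(X+λ₄), i.e., its eigenvalues are -λ₁, ..., -λ₄. -/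
open Polynomial

def observerMatrix {R : Type*} [CommRing R] (a b c d : R) : Matrix (Fin 4) (Fin 4) R :=
  !![-a, 0, 1, -1;
     -b, 0, 0, -1;
     -c, 0, 0, 0;
     -d, -1, 0, 0]

/-- Laplace expansion along the third row, where the characteristic matrix has only the
entries `c` and `X`. -/
theorem charpoly_observerMatrix {R : Type*} [CommRing R] (a b c d : R) :
    (observerMatrix a b c d).charpoly =
      X ^ 4 + C a * X ^ 3 + C (c - d - 1) * X ^ 2 + C (b - a) * X - C c := by
  rw [Matrix.charpoly, Matrix.det_succ_row _ 2, Fin.sum_univ_four]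
  simp [observerMatrix, Matrix.det_fin_three, Fin.succAbove, Fin.lt_def]
  ring

theorem observer_matrix_M1_charpoly_general
    (l1 l2 l3 l4 : ℝ) :
    let σ1 := l1 + l2 + l3 + l4
    let σ2 := l1*l2 + l1*l3 + l1*l4 + l2*l3 + l2*l4 + l3*l4
    let σ3 := l1*l2*l3 + l1*l2*l4 + l1*l3*l4 + l2*l3*l4
    let σ4 := l1*l2*l3*l4
    let K1 := σ1
    let K2 := σ1 + σ3
    let K3 := -σ4
    let K4 := -(σ2 + σ4 + 1)
    let M1 : Matrix (Fin 4) (Fin 4) ℝ :=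
      !![-K1, 0, 1, -1;
         -K2, 0, 0, -1;
         -K3, 0, 0, 0;
         -K4, -1, 0, 0]
    M1.charpoly = (X + C l1) * (X + C l2) * (X + C l3) * (X + C l4) := by
  intro σ1 σ2 σ3 σ4 K1 K2 K3 K4 M1
  change (observerMatrix K1 K2 K3 K4).charpoly = _
  -- the gains make the coefficients `σ1, σ2, σ3, σ4`; what remains is Vieta for four roots
  rw [charpoly_observerMatrix]
  simp only [K1, K2, K3, K4, σ1, σ2, σ3, σ4, map_add, map_sub, map_neg, map_mul, map_one]
  ring

/-- the observer matrix M₁ has eigenvalues -λ₁,...,-λ₄. -/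
theorem observer_matrix_M1_charpoly
    (l1 l2 l3 l4 : ℝ) (hl1 : 0 < l1) (hl2 : 0 < l2) (hl3 : 0 < l3) (hl4 : 0 < l4) :
    let σ1 := l1 + l2 + l3 + l4
    let σ2 := l1*l2 + l1*l3 + l1*l4 + l2*l3 + l2*l4 + l3*l4
    let σ3 := l1*l2*l3 + l1*l2*l4 + l1*l3*l4 + l2*l3*l4
    let σ4 := l1*l2*l3*l4
    let K1 := σ1
    let K2 := σ1 + σ3
    let K3 := -σ4
    let K4 := -(σ2 + σ4 + 1)
    let M1 : Matrix (Fin 4) (Fin 4) ℝ :=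
      !![-K1, 0, 1, -1;
         -K2, 0, 0, -1;
         -K3, 0, 0, 0;
         -K4, -1, 0, 0]
    M1.charpoly = (X + C l1) * (X + C l2) * (X + C l3) * (X + C l4) :=
  observer_matrix_M1_charpoly_general l1 l2 l3 l4
end
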